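/- arXiv:2101.11750 — 5 statements merged into one kernel-verified Lean document; each statement's English description precedes it below -/
import Mathlib

section
/- Let a_1, a_2 be probability vectors of length m (nonnegative entries, each summing to 1), and let p_1, p_2 ≥ 0 with p_1 + p_2 = 1. Then Σ_{j=1}^m p_1 p_2 (a_{1,j} - a_{2,j})^2 / (p_1 a_{1,j} + p_2 a_{2,j}) ≤ 1 - (Σ_{j=1}^m √(a_{1,j} a_{2,j}))^2, where terms with p_1 a_{1,j} + p_2 a_{2,j} = 0 are interpreted as 0. -/
/-!
Write `d = p₁a₁ + p₂a₂` for the output distribution. The identity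
`(p₂x + p₁y)(p₁x + p₂y) - xy = p₁p₂(x - y)²` bounds each term of the sum by
`p₂a₁ⱼ + p₁a₂ⱼ - a₁ⱼa₂ⱼ / dⱼ`; these sum to `1 - ∑ a₁ⱼa₂ⱼ / dⱼ`, and Cauchy–Schwarz with
`∑ dⱼ = 1` gives `(∑ √(a₁ⱼa₂ⱼ))² ≤ ∑ a₁ⱼa₂ⱼ / dⱼ`.
-/

open Finset

lemma Finset.sq_sum_sqrt_le_sum_div_mul_sum {ι : Type*} (s : Finset ι) {u w : ι → ℝ}
    (hu : ∀ i ∈ s, 0 ≤ u i) (hw : ∀ i ∈ s, 0 ≤ w i) (huw : ∀ i ∈ s, w i = 0 → u i = 0) :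
    (∑ i ∈ s, √(u i)) ^ 2 ≤ (∑ i ∈ s, u i / w i) * ∑ i ∈ s, w i :=
  sum_sq_le_sum_mul_sum_of_sq_le_mul s (fun i hi => div_nonneg (hu i hi) (hw i hi)) hw
    fun i hi => by rw [Real.sq_sqrt (hu i hi), div_mul_cancel_of_imp (huw i hi)]

section Mixture

variable {p₁ p₂ x y : ℝ}

lemma mix_mul_mix_sub_mul (hsum : p₁ + p₂ = 1) :
    (p₂ * x + p₁ * y) * (p₁ * x + p₂ * y) - x * y = p₁ * p₂ * (x - y) ^ 2 := by
  obtain rfl : p₂ = 1 - p₁ := by linarith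
  ring

lemma mul_le_mix_mul_mix (hp₁ : 0 ≤ p₁) (hp₂ : 0 ≤ p₂) (hsum : p₁ + p₂ = 1) :
    x * y ≤ (p₂ * x + p₁ * y) * (p₁ * x + p₂ * y) :=
  sub_nonneg.mp <| by rw [mix_mul_mix_sub_mul hsum]; positivity

lemma mul_eq_zero_of_mix_eq_zero (hp₁ : 0 ≤ p₁) (hp₂ : 0 ≤ p₂) (hsum : p₁ + p₂ = 1)
    (hx : 0 ≤ x) (hy : 0 ≤ y) (h : p₁ * x + p₂ * y = 0) : x * y = 0 :=
  le_antisymm (by simpa [h] using mul_le_mix_mul_mix (x := x) (y := y) hp₁ hp₂ hsum)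
    (mul_nonneg hx hy)

lemma mul_sq_sub_div_mix_le (hp₁ : 0 ≤ p₁) (hp₂ : 0 ≤ p₂) (hsum : p₁ + p₂ = 1)
    (hx : 0 ≤ x) (hy : 0 ≤ y) :
    p₁ * p₂ * (x - y) ^ 2 / (p₁ * x + p₂ * y)
      ≤ p₂ * x + p₁ * y - x * y / (p₁ * x + p₂ * y) := by
  rcases eq_or_ne (p₁ * x + p₂ * y) 0 with hd | hd
  · rw [hd, div_zero, div_zero, sub_zero]
    positivity
  · rw [← mix_mul_mix_sub_mul hsum, sub_div, mul_div_cancel_right₀ _ hd]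

end Mixture

theorem stmt0 (m : ℕ) (a1 a2 : Fin m → ℝ)
    (h10 : ∀ j, 0 ≤ a1 j) (h20 : ∀ j, 0 ≤ a2 j)
    (h11 : ∑ j, a1 j = 1) (h21 : ∑ j, a2 j = 1)
    (p1 p2 : ℝ) (hp1 : 0 ≤ p1) (hp2 : 0 ≤ p2) (hsum : p1 + p2 = 1) :
    ∑ j, p1 * p2 * (a1 j - a2 j) ^ 2 / (p1 * a1 j + p2 * a2 j)
      ≤ 1 - (∑ j, Real.sqrt (a1 j * a2 j)) ^ 2 := by
  set d : Fin m → ℝ := fun j => p1 * a1 j + p2 * a2 j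
  have hd : ∀ j, 0 ≤ d j := fun j => by positivity [h10 j, h20 j]
  have hd_sum : ∑ j, d j = 1 := by
    simp only [d, sum_add_distrib, ← mul_sum, h11, h21, mul_one, hsum]
  have hcs := sq_sum_sqrt_le_sum_div_mul_sum univ (fun j _ => mul_nonneg (h10 j) (h20 j))
    (fun j _ => hd j) fun j _ => mul_eq_zero_of_mix_eq_zero hp1 hp2 hsum (h10 j) (h20 j)
  calc ∑ j, p1 * p2 * (a1 j - a2 j) ^ 2 / d j
      ≤ ∑ j, (p2 * a1 j + p1 * a2 j - a1 j * a2 j / d j) :=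
        sum_le_sum fun j _ => mul_sq_sub_div_mix_le hp1 hp2 hsum (h10 j) (h20 j)
    _ = 1 - ∑ j, a1 j * a2 j / d j := by
        rw [sum_sub_distrib, sum_add_distrib, ← mul_sum, ← mul_sum, h11, h21, mul_one, mul_one,
          add_comm, hsum]
    _ ≤ 1 - (∑ j, Real.sqrt (a1 j * a2 j)) ^ 2 := by
        rw [hd_sum, mul_one] at hcs
        linarith
end

section
/- Given L strictly positive integers n_1, ..., n_L and a real number a with 0 ≤ a ≤ 1, the product Π_{ℓ=1}^L (1 - a^{n_ℓ}) is at most (1 - a^{(Σ_ℓ n_ℓ)/L})^L, with equality when all n_ℓ are equal. -/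
/-! Two applications of AM–GM: the product of the factors `1 - a ^ n ℓ` is at most the `L`-th
power of their mean, and the mean of the `a ^ n ℓ` is at least `a` raised to the mean exponent
(AM–GM with weights `1 / L` applied to the numbers `a ^ n ℓ`). -/

open Finset

theorem Real.prod_le_arith_mean_pow_card {ι : Type*} (s : Finset ι) (z : ι → ℝ)
    (hz : ∀ i ∈ s, 0 ≤ z i) : ∏ i ∈ s, z i ≤ ((∑ i ∈ s, z i) / #s) ^ #s := by
  rcases s.eq_empty_or_nonempty with rfl | hs
  · simp
  have hcard : (0 : ℝ) < #s := by exact_mod_cast hs.card_pos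
  have amgm := Real.geom_mean_le_arith_mean s (fun _ => 1) z (fun _ _ => zero_le_one)
    (by simpa using hcard) hz
  simp only [Real.rpow_one, sum_const, nsmul_eq_mul, mul_one, one_mul] at amgm
  calc ∏ i ∈ s, z i = ((∏ i ∈ s, z i) ^ (#s : ℝ)⁻¹) ^ #s := by
        rw [← Real.rpow_natCast, ← Real.rpow_mul (prod_nonneg hz), inv_mul_cancel₀ hcard.ne',
          Real.rpow_one]
    _ ≤ ((∑ i ∈ s, z i) / #s) ^ #s := by gcongr; exact Real.rpow_nonneg (prod_nonneg hz) _

theorem Real.rpow_arith_mean_le_arith_mean_rpow_left {ι : Type*} {s : Finset ι} (hs : s.Nonempty)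
    {a : ℝ} (ha : 0 ≤ a) (x : ι → ℝ) (hx : ∀ i ∈ s, 0 ≤ x i) :
    a ^ ((∑ i ∈ s, x i) / #s) ≤ (∑ i ∈ s, a ^ x i) / #s := by
  have hcard : (0 : ℝ) < #s := by exact_mod_cast hs.card_pos
  have amgm := Real.geom_mean_le_arith_mean_weighted s (fun _ => (#s : ℝ)⁻¹) (fun i => a ^ x i)
    (fun _ _ => by positivity) (by simp [hcard.ne']) (fun _ _ => Real.rpow_nonneg ha _)
  calc a ^ ((∑ i ∈ s, x i) / #s) = ∏ i ∈ s, (a ^ x i) ^ (#s : ℝ)⁻¹ := by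
        rw [div_eq_mul_inv, sum_mul, Real.rpow_sum_of_nonneg ha fun i hi => by
          have := hx i hi; positivity]
        exact prod_congr rfl fun i _ => Real.rpow_mul ha _ _
    _ ≤ ∑ i ∈ s, (#s : ℝ)⁻¹ * a ^ x i := amgm
    _ = (∑ i ∈ s, a ^ x i) / #s := by rw [← mul_sum, inv_mul_eq_div]

theorem stmt2_general (L : ℕ) (hL : 0 < L) (n : Fin L → ℕ)
    (a : ℝ) (ha0 : 0 ≤ a) (ha1 : a ≤ 1) :
    (∏ ℓ, (1 - a ^ (n ℓ))) ≤ (1 - a ^ ((∑ ℓ, (n ℓ : ℝ)) / (L : ℝ))) ^ L ∧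
    ((∀ ℓ ℓ', n ℓ = n ℓ') →
      (∏ ℓ, (1 - a ^ (n ℓ))) = (1 - a ^ ((∑ ℓ, (n ℓ : ℝ)) / (L : ℝ))) ^ L) := by
  refine ⟨?_, fun hconst => ?_⟩
  · have hfactor : ∀ ℓ, 0 ≤ 1 - a ^ n ℓ := fun ℓ => sub_nonneg.2 (pow_le_one₀ ha0 ha1)
    have hexp := Real.rpow_arith_mean_le_arith_mean_rpow_left (s := univ) ⟨⟨0, hL⟩, mem_univ _⟩
      ha0 (fun ℓ => (n ℓ : ℝ)) fun _ _ => Nat.cast_nonneg _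
    simp only [Real.rpow_natCast, card_univ, Fintype.card_fin] at hexp
    have hmean : (∑ ℓ, (1 - a ^ n ℓ)) / L = 1 - (∑ ℓ, a ^ n ℓ) / L := by
      rw [sum_sub_distrib, sum_const, card_univ, Fintype.card_fin, nsmul_one, sub_div,
        div_self (by positivity)]
    calc ∏ ℓ, (1 - a ^ n ℓ) ≤ ((∑ ℓ, (1 - a ^ n ℓ)) / L) ^ L := by
          simpa using Real.prod_le_arith_mean_pow_card univ _ fun ℓ _ => hfactor ℓ
      _ ≤ (1 - a ^ ((∑ ℓ, (n ℓ : ℝ)) / L)) ^ L := by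
          gcongr
          · exact div_nonneg (sum_nonneg fun ℓ _ => hfactor ℓ) L.cast_nonneg
          · linarith
  · obtain ⟨m, rfl⟩ : ∃ m, n = fun _ => m := ⟨n ⟨0, hL⟩, funext fun ℓ => hconst ℓ _⟩
    have hL' : (L : ℝ) ≠ 0 := by positivity
    simp [mul_div_cancel_left₀ _ hL']

theorem stmt2 (L : ℕ) (hL : 0 < L) (n : Fin L → ℕ) (hn : ∀ ℓ, 0 < n ℓ)
    (a : ℝ) (ha0 : 0 ≤ a) (ha1 : a ≤ 1) :
    (∏ ℓ, (1 - a ^ (n ℓ))) ≤ (1 - a ^ ((∑ ℓ, (n ℓ : ℝ)) / (L : ℝ))) ^ L ∧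
    ((∀ ℓ ℓ', n ℓ = n ℓ') →
      (∏ ℓ, (1 - a ^ (n ℓ))) = (1 - a ^ ((∑ ℓ, (n ℓ : ℝ)) / (L : ℝ))) ^ L) :=
  stmt2_general L hL n a ha0 ha1
end

section
/- Let 0 ≤ ξ < 1/2 and n ≥ 1. Consider the 2^n × 2^n matrix A whose rows are indexed by y ∈ {0,1}^n and columns by z ∈ {0,1}^n, with entry A_{y,z} = ξ^{d(y,z)} (1-ξ)^{n - d(y,z)}, where d is the Hamming distance. Then for any two distinct rows y ≠ y', Σ_z √(A_{y,z} A_{y',z}) ≥ (4ξ - 4ξ^2)^{n/2}. -/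
/-!
Each row of `A` is a product over the coordinates of the single-channel kernel, so the
overlap `∑ z, √(A y z * A y' z)` factors into a product of one-letter overlaps. Such a factor is
`1` where `y` and `y'` agree and `√(4ξ - 4ξ²) ≤ 1` where they differ; hence the overlap equals
`√(4ξ - 4ξ²) ^ d(y, y')`, which is at least `√(4ξ - 4ξ²) ^ n`.
-/

open Finset

def bscKernel (ξ : ℝ) (a b : Bool) : ℝ := if a = b then 1 - ξ else ξ

lemma prod_ite_eq_pow_hammingDist {ι β M : Type*} [Fintype ι] [DecidableEq β] [CommMonoid M]
    (x z : ι → β) (p q : M) :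
    ∏ i, (if x i = z i then q else p) =
      p ^ hammingDist x z * q ^ (Fintype.card ι - hammingDist x z) := by
  have hcard : #{i | x i = z i} = Fintype.card ι - hammingDist x z := by
    rw [← card_univ, ← card_filter_add_card_filter_not (s := univ) (fun i => x i = z i)]
    simp [hammingDist]
  rw [prod_ite, prod_const, prod_const, hcard, mul_comm]
  rfl

section bscKernel

variable {ξ : ℝ}

lemma sum_sqrt_bscKernel_mul (hξ0 : 0 ≤ ξ) (hξ1 : ξ ≤ 1) (a a' : Bool) :
    ∑ b, √(bscKernel ξ a b * bscKernel ξ a' b) =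
      if a = a' then 1 else √(4 * ξ - 4 * ξ ^ 2) := by
  have hcross : √(ξ * (1 - ξ)) + √((1 - ξ) * ξ) = √(4 * ξ - 4 * ξ ^ 2) := by
    rw [mul_comm (1 - ξ), ← two_mul, show 4 * ξ - 4 * ξ ^ 2 = 2 ^ 2 * (ξ * (1 - ξ)) by ring,
      Real.sqrt_mul (by norm_num : (0 : ℝ) ≤ 2 ^ 2), Real.sqrt_sq (by norm_num : (0 : ℝ) ≤ 2)]
  cases a <;> cases a' <;>
    simp [bscKernel, Real.sqrt_mul_self hξ0, Real.sqrt_mul_self (sub_nonneg.2 hξ1), hcross,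
      add_comm]

theorem sum_sqrt_bsc_rows_mul {ι : Type*} [Fintype ι] [DecidableEq ι]
    (hξ0 : 0 ≤ ξ) (hξ1 : ξ ≤ 1) (y y' : ι → Bool) :
    ∑ z : ι → Bool,
        √((ξ ^ hammingDist y z * (1 - ξ) ^ (Fintype.card ι - hammingDist y z)) *
          (ξ ^ hammingDist y' z * (1 - ξ) ^ (Fintype.card ι - hammingDist y' z))) =
      √(4 * ξ - 4 * ξ ^ 2) ^ hammingDist y y' := by
  have hrow (x z : ι → Bool) :
      ξ ^ hammingDist x z * (1 - ξ) ^ (Fintype.card ι - hammingDist x z) =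
        ∏ i, bscKernel ξ (x i) (z i) :=
    (prod_ite_eq_pow_hammingDist x z ξ (1 - ξ)).symm
  have hnonneg (a b : Bool) : 0 ≤ bscKernel ξ a b := by
    unfold bscKernel; split_ifs <;> linarith
  simp_rw [hrow, ← prod_mul_distrib]
  calc ∑ z : ι → Bool, √(∏ i, bscKernel ξ (y i) (z i) * bscKernel ξ (y' i) (z i))
      = ∑ z : ι → Bool, ∏ i, √(bscKernel ξ (y i) (z i) * bscKernel ξ (y' i) (z i)) := by
        simp_rw [Real.sqrt_prod _ fun i _ => mul_nonneg (hnonneg _ _) (hnonneg _ _)]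
    _ = ∏ i, ∑ b, √(bscKernel ξ (y i) b * bscKernel ξ (y' i) b) :=
        (Fintype.prod_sum fun i b => √(bscKernel ξ (y i) b * bscKernel ξ (y' i) b)).symm
    _ = √(4 * ξ - 4 * ξ ^ 2) ^ hammingDist y y' := by
        simp_rw [sum_sqrt_bscKernel_mul hξ0 hξ1, prod_ite_eq_pow_hammingDist, one_pow, mul_one]

end bscKernel

theorem stmt4_general (n : ℕ) (ξ : ℝ) (hξ0 : 0 ≤ ξ) (hξ : ξ < 1 / 2)
    (y y' : Fin n → Bool) :
    (4 * ξ - 4 * ξ ^ 2) ^ ((n : ℝ) / 2) ≤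
      ∑ z : Fin n → Bool,
        Real.sqrt ((ξ ^ hammingDist y z * (1 - ξ) ^ (n - hammingDist y z)) *
          (ξ ^ hammingDist y' z * (1 - ξ) ^ (n - hammingDist y' z))) := by
  have hξ1 : ξ ≤ 1 := by linarith
  have hoverlap := sum_sqrt_bsc_rows_mul hξ0 hξ1 y y'
  rw [Fintype.card_fin] at hoverlap
  rw [hoverlap, Real.rpow_div_two_eq_sqrt _ (by nlinarith), Real.rpow_natCast]
  exact pow_le_pow_of_le_one (Real.sqrt_nonneg _)
    (Real.sqrt_le_one.2 (by nlinarith [sq_nonneg (2 * ξ - 1)]))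
    (hammingDist_le_card_fintype.trans_eq (Fintype.card_fin n))

theorem stmt4 (n : ℕ) (hn : 1 ≤ n) (ξ : ℝ) (hξ0 : 0 ≤ ξ) (hξ : ξ < 1 / 2)
    (y y' : Fin n → Bool) (hyy : y ≠ y') :
    (4 * ξ - 4 * ξ ^ 2) ^ ((n : ℝ) / 2) ≤
      ∑ z : Fin n → Bool,
        Real.sqrt ((ξ ^ hammingDist y z * (1 - ξ) ^ (n - hammingDist y z)) *
          (ξ ^ hammingDist y' z * (1 - ξ) ^ (n - hammingDist y' z))) :=
  stmt4_general n ξ hξ0 hξ y y'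
end

section
/- Let X → Y → Z be a Markov chain of finitely-supported random variables, where Z is obtained from Y by passing each of n binary coordinates of Y through an independent binary symmetric channel with crossover probability ξ, 0 ≤ ξ < 1/2. Then I(X;Z) ≤ (1 - (4ξ - 4ξ^2)^n) · I(X;Y). -/
/-!
Mutual information obeys the chain rule `I(X; S, T) = I(X; S) + I(X; T | S)`. Suppose the
channel `K` contracts `I(X; ·)` by the factor `a` and `L` by `b`, and feed `Y = (Y₁, Y₂)` into
`K ⊗ L`, producing `Z = (Z₁, Z₂)`. The chain rule applied to `(Z₁, Z₂)` and to `(Z₁, Y₂)` gives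
`I(X; Z) = I(X; Z₁) + I(X; Z₂ | Z₁) ≤ I(X; Z₁) + b (I(X; Z₁, Y₂) - I(X; Z₁))`, and since
`I(X; Z₁) ≤ a I(X; Y)` and `I(X; Z₁, Y₂) ≤ I(X; Y)` by data processing, `K ⊗ L` contracts by
`1 - (1 - a) (1 - b)`.

A single BSC(ξ) contracts by `(1 - 2ξ)²`: writing the input law as a mixture of Bernoulli laws,
the claim is Jensen's inequality for `t ↦ h(ξ + (1 - 2ξ) t) - (1 - 2ξ)² h(t)` (`h` the binary
entropy), which is convex because `t (1 - t) ≤ φ (1 - φ)` for `φ = ξ + (1 - 2ξ) t`.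
Tensorizing `n` copies gives `1 - (1 - (1 - 2ξ)²)ⁿ = 1 - (4ξ - 4ξ²)ⁿ`.
-/

open Finset

/-- Shannon entropy (natural logarithm) of a finitely-supported distribution. -/
noncomputable def ent {α : Type*} [Fintype α] (p : α → ℝ) : ℝ :=
  -∑ x, p x * Real.log (p x)

/-- Mutual information of a joint distribution on a finite product space. -/
noncomputable def mutInfo {α β : Type*} [Fintype α] [Fintype β] (p : α × β → ℝ) : ℝ :=
  ent (fun x => ∑ y, p (x, y)) + ent (fun y => ∑ x, p (x, y)) - ent p

/-- Transition probability of `n` independent BSC(ξ) channels. -/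
noncomputable def bscChannel (ξ : ℝ) {n : ℕ} (y z : Fin n → Bool) : ℝ :=
  ξ ^ (hammingDist y z) * (1 - ξ) ^ (n - hammingDist y z)

open Real

section Entropy

variable {σ U V : Type*} [Fintype σ] [Fintype U] [Fintype V]

lemma ent_eq_sum_negMulLog (p : U → ℝ) : ent p = ∑ u, negMulLog (p u) := by
  simp [ent, negMulLog, sum_neg_distrib]

lemma ent_comp_equiv (e : U ≃ V) (p : V → ℝ) : ent (fun u => p (e u)) = ent p := by
  simp only [ent_eq_sum_negMulLog, Equiv.sum_comp e (fun v => negMulLog (p v))]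

lemma ent_prod (f : σ × U → ℝ) : ent f = ∑ s, ent (fun u => f (s, u)) := by
  simp only [ent_eq_sum_negMulLog, Fintype.sum_prod_type]

lemma ent_const_mul {k : V → ℝ} (hk : ∑ v, k v = 1) (c : ℝ) :
    ent (fun v => c * k v) = negMulLog c + c * ent k := by
  simp only [ent_eq_sum_negMulLog, negMulLog_mul, sum_add_distrib, ← sum_mul,
    ← mul_sum, hk, one_mul]

lemma ent_mul_channel (d : U → ℝ) {K : U → V → ℝ} (hK : ∀ u, ∑ v, K u v = 1) :
    ent (fun q : U × V => d q.1 * K q.1 q.2) = ent d + ∑ u, d u * ent (K u) := by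
  simp only [ent_prod (fun q : U × V => d q.1 * K q.1 q.2), ent_const_mul (hK _),
    sum_add_distrib, ent_eq_sum_negMulLog d]

lemma mul_ent_div {d : U → ℝ} {c : ℝ} (hd : ∀ u, 0 ≤ d u) (hc : ∑ u, d u = c) :
    c * ent (fun u => d u / c) = ent d + c * log c := by
  rcases eq_or_ne c 0 with rfl | hc0
  · have hd0 : d = 0 := funext fun u =>
      (sum_eq_zero_iff_of_nonneg fun i _ => hd i).1 hc u (mem_univ u)
    simp [ent, hd0]
  · have hterm : ∀ u, c * (d u / c * log (d u / c)) = d u * log (d u) - d u * log c := by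
      intro u
      rcases eq_or_ne (d u) 0 with h | h
      · simp [h]
      · rw [log_div h hc0]
        field_simp
    simp only [ent, mul_neg, mul_sum, hterm, sum_sub_distrib, ← sum_mul, hc]
    ring

end Entropy

section MutualInformation

variable {α β γ : Type*} [Fintype α] [Fintype β] [Fintype γ]

lemma mutInfo_comp_snd_equiv (e : γ ≃ β) (p : α × β → ℝ) :
    mutInfo (fun q : α × γ => p (q.1, e q.2)) = mutInfo p := by
  have hX : (fun x => ∑ y, p (x, e y)) = fun x => ∑ y, p (x, y) :=
    funext fun x => Equiv.sum_comp e (fun y => p (x, y))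
  have hXY : ent (fun q : α × γ => p (q.1, e q.2)) = ent p :=
    ent_comp_equiv ((Equiv.refl α).prodCongr e) p
  rw [mutInfo, hX, ent_comp_equiv e (fun y => ∑ x, p (x, y)), hXY, mutInfo]

lemma mul_mutInfo_div {p : α × β → ℝ} {c : ℝ} (hp : ∀ q, 0 ≤ p q) (hc : ∑ q, p q = c) :
    c * mutInfo (fun q => p q / c) = mutInfo p + c * log c := by
  have hX : ∑ x, ∑ y, p (x, y) = c := by rw [← Fintype.sum_prod_type, hc]
  have hY : ∑ y, ∑ x, p (x, y) = c := by rw [sum_comm, hX]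
  simp only [mutInfo, ← sum_div, mul_add, mul_sub]
  rw [mul_ent_div (fun x => sum_nonneg fun y _ => hp _) hX,
    mul_ent_div (fun y => sum_nonneg fun x _ => hp _) hY, mul_ent_div hp hc]
  ring

lemma mul_log_add_mul_log_sub_mul_log_le {w a b : ℝ} (hw : 0 ≤ w) (ha : w ≤ a) (hb : w ≤ b) :
    w * log a + w * log b - w * log w ≤ a * b - w := by
  rcases hw.eq_or_lt with rfl | hw
  · simpa using mul_nonneg ha hb
  have hab : 0 < a * b := mul_pos (hw.trans_le ha) (hw.trans_le hb)
  have hlog := log_le_sub_one_of_pos (div_pos hab hw)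
  rw [log_div hab.ne' hw.ne', log_mul (hw.trans_le ha).ne' (hw.trans_le hb).ne'] at hlog
  have h := mul_le_mul_of_nonneg_left hlog hw.le
  have hrhs : w * (a * b / w - 1) = a * b - w := by field_simp
  linarith

theorem mutInfo_nonneg {w : α × β → ℝ} (hw0 : ∀ q, 0 ≤ w q) (hw1 : ∑ q, w q = 1) :
    0 ≤ mutInfo w := by
  set a := fun x => ∑ y, w (x, y)
  set b := fun y => ∑ x, w (x, y)
  have hexpand : mutInfo w = -∑ x, ∑ y,
      (w (x, y) * log (a x) + w (x, y) * log (b y) - w (x, y) * log (w (x, y))) := by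
    simp only [mutInfo, ent, Fintype.sum_prod_type, sum_sub_distrib, sum_add_distrib, ← sum_mul]
    rw [sum_comm (f := fun x y => w (x, y) * log (b y))]
    simp only [← sum_mul]
    ring
  have ha : ∑ x, a x = 1 := by rw [← hw1, Fintype.sum_prod_type]
  have hb : ∑ y, b y = 1 := by rw [← ha, sum_comm]
  have hab : ∑ x, ∑ y, (a x * b y - w (x, y)) = 0 := by
    simp only [sum_sub_distrib, ← mul_sum, hb, mul_one, ha]
    exact sub_eq_zero.2 ha.symm
  rw [hexpand, neg_nonneg, ← hab]
  exact sum_le_sum fun x _ => sum_le_sum fun y _ => mul_log_add_mul_log_sub_mul_log_le (hw0 _)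
    (single_le_sum (fun y _ => hw0 (x, y)) (mem_univ y))
    (single_le_sum (f := fun x => w (x, y)) (fun x _ => hw0 (x, y)) (mem_univ x))

lemma sum_mul_mutInfo_div_nonneg {p : α × β → ℝ} (hp : ∀ q, 0 ≤ p q) :
    0 ≤ (∑ q, p q) * mutInfo (fun q => p q / ∑ q', p q') := by
  rcases (sum_nonneg fun q (_ : q ∈ univ) => hp q).eq_or_lt with h | h
  · rw [← h, zero_mul]
  · exact mul_nonneg h.le (mutInfo_nonneg (fun q => div_nonneg (hp q) h.le)
      (by rw [← sum_div, div_self h.ne']))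

lemma mutInfo_eq_zero_of_unique [Unique γ] {p : α × γ → ℝ} (hp : ∑ q, p q = 1) :
    mutInfo p = 0 := by
  have hX : ∑ x, p (x, default) = 1 := by simpa [Fintype.sum_prod_type] using hp
  simp [mutInfo, ent, Fintype.sum_prod_type, hX]

end MutualInformation

section ChainRule

variable {α σ τ : Type*} [Fintype α] [Fintype σ] [Fintype τ]

/-- A function `p : α × (σ × τ) → ℝ` is read as the joint law of `(X, (S, T))`; its slice at `s`
is the unnormalized law of `(X, T)` on the event `S = s`. -/
def sliceAt (p : α × (σ × τ) → ℝ) (s : σ) : α × τ → ℝ := fun u => p (u.1, (s, u.2))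

def marginalXS (p : α × (σ × τ) → ℝ) : α × σ → ℝ := fun xs => ∑ t, p (xs.1, (xs.2, t))

/-- `I(X; T | S)` for a joint law `p` of `(X, (S, T))`. -/
noncomputable def condMutInfo (p : α × (σ × τ) → ℝ) : ℝ :=
  ∑ s, (∑ u, sliceAt p s u) * mutInfo (fun u => sliceAt p s u / ∑ u', sliceAt p s u')

lemma condMutInfo_nonneg {p : α × (σ × τ) → ℝ} (hp : ∀ q, 0 ≤ p q) : 0 ≤ condMutInfo p :=
  sum_nonneg fun _ _ => sum_mul_mutInfo_div_nonneg fun _ => hp _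

lemma condMutInfo_eq {p : α × (σ × τ) → ℝ} (hp : ∀ q, 0 ≤ p q) :
    condMutInfo p = ent (marginalXS p) + ent (fun st => ∑ x, p (x, st)) - ent p
      - ent (fun s => ∑ u, sliceAt p s u) := by
  have hslice : ∀ s, (∑ u, sliceAt p s u) * mutInfo (fun u => sliceAt p s u / ∑ u', sliceAt p s u')
      = ent (fun x => ∑ t, p (x, (s, t))) + ent (fun t => ∑ x, p (x, (s, t)))
        - ent (sliceAt p s) + (∑ u, sliceAt p s u) * log (∑ u, sliceAt p s u) :=
    fun s => mul_mutInfo_div (fun _ => hp _) rfl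
  have hXS : ent (marginalXS p) = ∑ s, ent (fun x => ∑ t, p (x, (s, t))) := by
    rw [← ent_comp_equiv (Equiv.prodComm σ α), ent_prod]
    rfl
  have hXST : ent p = ∑ s, ent (sliceAt p s) := by
    simp only [ent_eq_sum_negMulLog, sliceAt, Fintype.sum_prod_type]
    exact sum_comm
  have hS : ∑ s, (∑ u, sliceAt p s u) * log (∑ u, sliceAt p s u)
      = -ent (fun s => ∑ u, sliceAt p s u) := by
    simp [ent]
  rw [condMutInfo, sum_congr rfl fun s _ => hslice s]
  simp only [sum_add_distrib, sum_sub_distrib]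
  rw [hXS, ent_prod (fun st => ∑ x, p (x, st)), hXST, hS]
  ring

theorem mutInfo_eq_add_condMutInfo {p : α × (σ × τ) → ℝ} (hp : ∀ q, 0 ≤ p q) :
    mutInfo p = mutInfo (marginalXS p) + condMutInfo p := by
  have hX : (fun x => ∑ st : σ × τ, p (x, st)) = fun x => ∑ s, marginalXS p (x, s) :=
    funext fun x => Fintype.sum_prod_type _
  have hS : (fun s => ∑ x, marginalXS p (x, s)) = fun s => ∑ u, sliceAt p s u :=
    funext fun s => (Fintype.sum_prod_type (sliceAt p s)).symm
  rw [condMutInfo_eq hp, mutInfo, mutInfo, hX, hS]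
  ring

lemma mutInfo_marginalXS_le {p : α × (σ × τ) → ℝ} (hp : ∀ q, 0 ≤ p q) :
    mutInfo (marginalXS p) ≤ mutInfo p := by
  linarith [mutInfo_eq_add_condMutInfo hp, condMutInfo_nonneg hp]

lemma sum_marginalXS (p : α × (σ × τ) → ℝ) : ∑ q, marginalXS p q = ∑ q, p q := by
  simp only [marginalXS, Fintype.sum_prod_type]

end ChainRule

section Channels

variable {α β γ : Type*} [Fintype β]

structure IsChannel [Fintype γ] (K : β → γ → ℝ) : Prop where
  nonneg : ∀ y z, 0 ≤ K y z
  sum_eq_one : ∀ y, ∑ z, K y z = 1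

def pushThrough (w : α × β → ℝ) (K : β → γ → ℝ) : α × γ → ℝ :=
  fun q => ∑ y, w (q.1, y) * K y q.2

lemma pushThrough_nonneg [Fintype γ] {w : α × β → ℝ} {K : β → γ → ℝ} (hw : ∀ q, 0 ≤ w q)
    (hK : IsChannel K) (q : α × γ) : 0 ≤ pushThrough w K q :=
  sum_nonneg fun _ _ => mul_nonneg (hw _) (hK.nonneg _ _)

lemma sum_pushThrough [Fintype α] [Fintype γ] (w : α × β → ℝ) {K : β → γ → ℝ} (hK : IsChannel K) :
    ∑ q, pushThrough w K q = ∑ q, w q := by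
  simp only [pushThrough, Fintype.sum_prod_type]
  refine sum_congr rfl fun x _ => ?_
  rw [sum_comm]
  simp only [← mul_sum, hK.sum_eq_one, mul_one]

lemma pushThrough_div (w : α × β → ℝ) (K : β → γ → ℝ) (c : ℝ) :
    pushThrough (fun q => w q / c) K = fun q => pushThrough w K q / c := by
  ext q
  simp only [pushThrough, sum_div, div_mul_eq_mul_div]

lemma mutInfo_mul_channel [Fintype α] [Fintype γ] (w : α × β → ℝ) {K : β → γ → ℝ}
    (hK : IsChannel K) :
    mutInfo (fun q : α × (β × γ) => w (q.1, q.2.1) * K q.2.1 q.2.2) = mutInfo w := by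
  have hX : (fun x => ∑ yz : β × γ, w (x, yz.1) * K yz.1 yz.2) = fun x => ∑ y, w (x, y) := by
    ext x
    simp only [Fintype.sum_prod_type, ← mul_sum, hK.sum_eq_one, mul_one]
  have hYZ : ent (fun yz : β × γ => ∑ x, w (x, yz.1) * K yz.1 yz.2)
      = ent (fun y => ∑ x, w (x, y)) + ∑ y, (∑ x, w (x, y)) * ent (K y) := by
    simp only [← sum_mul]
    exact ent_mul_channel (fun y => ∑ x, w (x, y)) hK.sum_eq_one
  have hXYZ : ent (fun q : α × (β × γ) => w (q.1, q.2.1) * K q.2.1 q.2.2)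
      = ent w + ∑ y, (∑ x, w (x, y)) * ent (K y) := by
    rw [← ent_comp_equiv (Equiv.prodAssoc α β γ)]
    refine (ent_mul_channel w fun xy => hK.sum_eq_one xy.2).trans ?_
    rw [Fintype.sum_prod_type, sum_comm]
    simp only [← sum_mul]
  rw [mutInfo, hX, hYZ, hXYZ, mutInfo]
  ring

theorem mutInfo_pushThrough_le [Fintype α] [Fintype γ] {w : α × β → ℝ} {K : β → γ → ℝ}
    (hw : ∀ q, 0 ≤ w q) (hK : IsChannel K) : mutInfo (pushThrough w K) ≤ mutInfo w := by
  let r : α × (γ × β) → ℝ := fun q => w (q.1, q.2.2) * K q.2.2 q.2.1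
  have hr : mutInfo r = mutInfo w := (mutInfo_comp_snd_equiv (Equiv.prodComm γ β)
    fun q : α × (β × γ) => w (q.1, q.2.1) * K q.2.1 q.2.2).trans (mutInfo_mul_channel w hK)
  have hmarg : marginalXS r = pushThrough w K := rfl
  calc mutInfo (pushThrough w K) = mutInfo (marginalXS r) := by rw [hmarg]
    _ ≤ mutInfo r := mutInfo_marginalXS_le fun _ => mul_nonneg (hw _) (hK.nonneg _ _)
    _ = mutInfo w := hr

end Channels

def SatisfiesSDPI (α : Type*) {β γ : Type*} [Fintype α] [Fintype β] [Fintype γ]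
    (K : β → γ → ℝ) (c : ℝ) : Prop :=
  ∀ w : α × β → ℝ, (∀ q, 0 ≤ w q) → ∑ q, w q = 1 → mutInfo (pushThrough w K) ≤ c * mutInfo w

def applyLast {α σ β γ : Type*} [Fintype β] (q : α × (σ × β) → ℝ) (L : β → γ → ℝ) :
    α × (σ × γ) → ℝ :=
  fun r => pushThrough (sliceAt q r.2.1) L (r.1, r.2.2)

def tensorChannel {β γ β' γ' : Type*} (K : β → β' → ℝ) (L : γ → γ' → ℝ) :
    β × γ → β' × γ' → ℝ :=
  fun y z => K y.1 z.1 * L y.2 z.2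

def idChannel {β : Type*} [DecidableEq β] (y z : β) : ℝ := if y = z then 1 else 0

def piChannel {ι β γ : Type*} [Fintype ι] (K : β → γ → ℝ) (y : ι → β) (z : ι → γ) : ℝ :=
  ∏ i, K (y i) (z i)

section SDPI

variable {α β γ β' γ' σ : Type*}

lemma IsChannel.tensor [Fintype β'] [Fintype γ'] {K : β → β' → ℝ} {L : γ → γ' → ℝ}
    (hK : IsChannel K) (hL : IsChannel L) :
    IsChannel (tensorChannel K L) where
  nonneg _ _ := mul_nonneg (hK.nonneg _ _) (hL.nonneg _ _)
  sum_eq_one y := by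
    simp only [tensorChannel, Fintype.sum_prod_type, ← mul_sum, hL.sum_eq_one, mul_one,
      hK.sum_eq_one]

lemma isChannel_idChannel [Fintype β] [DecidableEq β] : IsChannel (idChannel : β → β → ℝ) where
  nonneg y z := by unfold idChannel; split_ifs <;> norm_num
  sum_eq_one y := by simp [idChannel]

lemma IsChannel.pi [Fintype γ] {ι : Type*} [Fintype ι] [DecidableEq ι] {K : β → γ → ℝ}
    (hK : IsChannel K) :
    IsChannel (piChannel K : (ι → β) → (ι → γ) → ℝ) where
  nonneg _ _ := prod_nonneg fun _ _ => hK.nonneg _ _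
  sum_eq_one y := by
    classical
    simp only [piChannel, ← Fintype.prod_sum fun i c => K (y i) c, hK.sum_eq_one, prod_const_one]

lemma satisfiesSDPI_zero_of_unique [Fintype α] [Fintype β] [Fintype γ] [Unique γ]
    {K : β → γ → ℝ} (hK : IsChannel K) :
    SatisfiesSDPI α K 0 := fun w _ hw1 => by
  rw [mutInfo_eq_zero_of_unique (by rw [sum_pushThrough w hK, hw1]), zero_mul]

lemma SatisfiesSDPI.comp_equiv [Fintype α] [Fintype β] [Fintype γ] [Fintype β'] [Fintype γ']
    {K : β → γ → ℝ} {c : ℝ} (h : SatisfiesSDPI α K c) (e : β' ≃ β) (f : γ' ≃ γ) :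
    SatisfiesSDPI α (fun y z => K (e y) (f z)) c := by
  intro w hw0 hw1
  let w' : α × β → ℝ := fun q => w (q.1, e.symm q.2)
  have hpush : pushThrough w (fun y z => K (e y) (f z))
      = fun q => pushThrough w' K (q.1, f q.2) := by
    ext q
    simp only [pushThrough, w']
    rw [← Equiv.sum_comp e (fun y => w (q.1, e.symm y) * K y (f q.2))]
    simp only [Equiv.symm_apply_apply]
  have hw'1 : ∑ q, w' q = 1 := by
    rw [← hw1]
    exact Equiv.sum_comp ((Equiv.refl α).prodCongr e.symm) w
  rw [hpush, mutInfo_comp_snd_equiv f, ← mutInfo_comp_snd_equiv e.symm w]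
  exact h w' (fun _ => hw0 _) hw'1

lemma SatisfiesSDPI.sum_mul_mutInfo_div_le [Fintype α] [Fintype β] [Fintype γ] {K : β → γ → ℝ}
    {c : ℝ} (h : SatisfiesSDPI α K c) (hK : IsChannel K) {w : α × β → ℝ} (hw : ∀ q, 0 ≤ w q) :
    (∑ q, pushThrough w K q) * mutInfo (fun q => pushThrough w K q / ∑ q', pushThrough w K q')
      ≤ c * ((∑ q, w q) * mutInfo (fun q => w q / ∑ q', w q')) := by
  rw [sum_pushThrough w hK, ← pushThrough_div]
  rcases (sum_nonneg fun q (_ : q ∈ univ) => hw q).eq_or_lt with h0 | hpos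
  · simp [← h0]
  · have hnorm := h _ (fun q => div_nonneg (hw q) hpos.le) (by rw [← sum_div, div_self hpos.ne'])
    calc _ ≤ (∑ q, w q) * (c * mutInfo fun q => w q / ∑ q', w q') :=
          mul_le_mul_of_nonneg_left hnorm hpos.le
      _ = _ := by ring

lemma SatisfiesSDPI.condMutInfo_applyLast_le [Fintype α] [Fintype β] [Fintype γ] [Fintype σ]
    {L : β → γ → ℝ} {c : ℝ} (h : SatisfiesSDPI α L c) (hL : IsChannel L)
    {q : α × (σ × β) → ℝ} (hq : ∀ r, 0 ≤ q r) :
    condMutInfo (applyLast q L) ≤ c * condMutInfo q := by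
  rw [condMutInfo, condMutInfo, mul_sum]
  exact sum_le_sum fun s _ => h.sum_mul_mutInfo_div_le hL (w := sliceAt q s) fun _ => hq _

lemma marginalXS_pushThrough_tensorChannel [Fintype β] [Fintype γ] [Fintype γ']
    (w : α × (β × γ) → ℝ) (K : β → β' → ℝ) {L : γ → γ' → ℝ} (hL : ∀ y, ∑ z, L y z = 1) :
    marginalXS (pushThrough w (tensorChannel K L)) = pushThrough (marginalXS w) K := by
  ext q
  simp only [marginalXS, pushThrough, tensorChannel]
  rw [sum_comm]
  simp only [← mul_sum, hL, mul_one, Fintype.sum_prod_type, sum_mul]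

lemma pushThrough_tensorChannel_eq_applyLast [Fintype β] [Fintype γ] [DecidableEq γ]
    (w : α × (β × γ) → ℝ) (K : β → β' → ℝ) (L : γ → γ' → ℝ) :
    pushThrough w (tensorChannel K L)
      = applyLast (pushThrough w (tensorChannel K idChannel)) L := by
  ext r
  simp only [applyLast, sliceAt, pushThrough, tensorChannel, idChannel, sum_mul]
  rw [sum_comm]
  simp [mul_assoc]

theorem SatisfiesSDPI.tensor [Fintype α] [Fintype β] [Fintype γ] [Fintype β'] [Fintype γ']
    {K : β → β' → ℝ} {L : γ → γ' → ℝ} {a b : ℝ}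
    (hKa : SatisfiesSDPI α K a) (hLb : SatisfiesSDPI α L b) (hK : IsChannel K) (hL : IsChannel L)
    (ha : 0 ≤ a) (hb0 : 0 ≤ b) (hb1 : b ≤ 1) :
    SatisfiesSDPI α (tensorChannel K L) (a + b - a * b) := by
  classical
  intro w hw0 hw1
  -- the law of `(X, (Z₁, Y₂))`
  set q := pushThrough w (tensorChannel K idChannel)
  have hq0 : ∀ r, 0 ≤ q r := pushThrough_nonneg hw0 (hK.tensor isChannel_idChannel)
  set M := mutInfo (pushThrough (marginalXS w) K)
  have hM : M ≤ a * mutInfo w :=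
    (hKa (marginalXS w) (fun _ => sum_nonneg fun _ _ => hw0 _) (by rw [sum_marginalXS, hw1])).trans
      (mul_le_mul_of_nonneg_left (mutInfo_marginalXS_le hw0) ha)
  have hp : mutInfo (pushThrough w (tensorChannel K L)) = M + condMutInfo (applyLast q L) := by
    rw [mutInfo_eq_add_condMutInfo (pushThrough_nonneg hw0 (hK.tensor hL)),
      marginalXS_pushThrough_tensorChannel w K hL.sum_eq_one,
      pushThrough_tensorChannel_eq_applyLast]
  have hq : mutInfo q = M + condMutInfo q := by
    rw [mutInfo_eq_add_condMutInfo hq0,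
      marginalXS_pushThrough_tensorChannel w K isChannel_idChannel.sum_eq_one]
  have hqw : mutInfo q ≤ mutInfo w := mutInfo_pushThrough_le hw0 (hK.tensor isChannel_idChannel)
  have hcond := hLb.condMutInfo_applyLast_le hL hq0
  nlinarith [mul_nonneg (sub_nonneg.2 hb1) (sub_nonneg.2 hM), mul_le_mul_of_nonneg_left hqw hb0]

theorem SatisfiesSDPI.pi [Fintype α] [Fintype β] [Fintype γ] {K : β → γ → ℝ} {a : ℝ}
    (h : SatisfiesSDPI α K a) (hK : IsChannel K) (ha0 : 0 ≤ a) (ha1 : a ≤ 1) :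
    ∀ n : ℕ, SatisfiesSDPI α (piChannel K : (Fin n → β) → (Fin n → γ) → ℝ) (1 - (1 - a) ^ n)
  | 0 => by
    rw [pow_zero, sub_self]
    exact satisfiesSDPI_zero_of_unique hK.pi
  | n + 1 => by
    have hpow0 : 0 ≤ (1 - a) ^ n := pow_nonneg (by linarith) n
    have hpow1 : (1 - a) ^ n ≤ 1 := pow_le_one₀ (by linarith) (by linarith)
    have htensor := h.tensor (h.pi hK ha0 ha1 n) hK (hK.pi (ι := Fin n)) ha0
      (by linarith) (by linarith)
    convert htensor.comp_equiv (Fin.consEquiv fun _ => β).symm (Fin.consEquiv fun _ => γ).symm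
      using 1
    · ext y z
      exact Fin.prod_univ_succ _
    · ring

end SDPI

def bernoulliDist (t : ℝ) (b : Bool) : ℝ := if b then t else 1 - t

def bsc (ξ : ℝ) (y z : Bool) : ℝ := if y = z then 1 - ξ else ξ

section BinarySymmetricChannel

variable {α : Type*}

lemma sum_bernoulliDist (t : ℝ) : ∑ b, bernoulliDist t b = 1 := by simp [bernoulliDist]

lemma ent_bernoulliDist (t : ℝ) : ent (bernoulliDist t) = binEntropy t := by
  simp [ent_eq_sum_negMulLog, bernoulliDist, binEntropy_eq_negMulLog_add_negMulLog_one_sub]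

lemma mutInfo_mul_bernoulliDist [Fintype α] {P : α → ℝ} (t : α → ℝ) (hP : ∑ x, P x = 1) :
    mutInfo (fun q => P q.1 * bernoulliDist (t q.1) q.2)
      = binEntropy (∑ x, P x * t x) - ∑ x, P x * binEntropy (t x) := by
  have hX : (fun x => ∑ b, P x * bernoulliDist (t x) b) = P := by
    ext x
    rw [← mul_sum, sum_bernoulliDist, mul_one]
  have hY : (fun b => ∑ x, P x * bernoulliDist (t x) b) = bernoulliDist (∑ x, P x * t x) := by
    ext b
    cases b <;> simp [bernoulliDist, mul_sub, sum_sub_distrib, hP]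
  rw [mutInfo, hX, hY, ent_bernoulliDist,
    ent_mul_channel P (K := fun x => bernoulliDist (t x)) fun x => sum_bernoulliDist (t x)]
  simp only [ent_bernoulliDist]
  ring

lemma exists_eq_mul_bernoulliDist [Fintype α] {w : α × Bool → ℝ} (hw : ∀ q, 0 ≤ w q) :
    ∃ P t : α → ℝ, (∀ x, 0 ≤ P x) ∧ ∑ x, P x = ∑ q, w q ∧ (∀ x, t x ∈ Set.Icc 0 1) ∧
      w = fun q => P q.1 * bernoulliDist (t q.1) q.2 := by
  have hP : ∀ x, 0 ≤ w (x, true) + w (x, false) := fun x => add_nonneg (hw _) (hw _)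
  refine ⟨fun x => w (x, true) + w (x, false), fun x => w (x, true) / (w (x, true) + w (x, false)),
    hP, by simp [Fintype.sum_prod_type], fun x => ⟨div_nonneg (hw _) (hP x),
      div_le_one_of_le₀ (le_add_of_nonneg_right (hw _)) (hP x)⟩, ?_⟩
  ext ⟨x, b⟩
  rcases eq_or_ne (w (x, true) + w (x, false)) 0 with h | h
  · have ht : w (x, true) = 0 := by linarith [hw (x, true), hw (x, false)]
    have hf : w (x, false) = 0 := by linarith [hw (x, true), hw (x, false)]
    cases b <;> simp [ht, hf, bernoulliDist]
  · cases b
    · simp only [bernoulliDist, Bool.false_eq_true, if_false]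
      field_simp
      ring
    · simp only [bernoulliDist, if_true]
      field_simp

lemma pushThrough_bsc (P t : α → ℝ) (ξ : ℝ) :
    pushThrough (fun q => P q.1 * bernoulliDist (t q.1) q.2) (bsc ξ)
      = fun q => P q.1 * bernoulliDist (ξ + (1 - 2 * ξ) * t q.1) q.2 := by
  ext ⟨x, b⟩
  cases b <;> simp [pushThrough, bsc, bernoulliDist] <;> ring

lemma isChannel_bsc {ξ : ℝ} (h0 : 0 ≤ ξ) (h1 : ξ ≤ 1) : IsChannel (bsc ξ) where
  nonneg y z := by unfold bsc; split_ifs <;> linarith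
  sum_eq_one y := by cases y <;> simp [bsc]

lemma convexOn_binEntropy_affine_sub {ξ : ℝ} (h0 : 0 ≤ ξ) (h1 : ξ ≤ 1) :
    ConvexOn ℝ (Set.Icc 0 1)
      fun t => binEntropy (ξ + (1 - 2 * ξ) * t) - (1 - 2 * ξ) ^ 2 * binEntropy t := by
  set d := 1 - 2 * ξ with hd
  have hφ : ∀ t ∈ Set.Ioo (0 : ℝ) 1, 0 < ξ + d * t ∧ ξ + d * t < 1 := by
    intro t ⟨ht0, ht1⟩
    have ht : 0 < t * (1 - t) := mul_pos ht0 (sub_pos.2 ht1)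
    rw [hd]
    constructor
    · nlinarith [mul_nonneg h0 (sq_nonneg (1 - t)), mul_nonneg (sub_nonneg.2 h1) (sq_nonneg t)]
    · nlinarith [mul_nonneg h0 (sq_nonneg t), mul_nonneg (sub_nonneg.2 h1) (sq_nonneg (1 - t))]
  refine convexOn_of_hasDerivWithinAt2_nonneg (convex_Icc 0 1) (by fun_prop)
    (f' := fun t => d * (log (1 - (ξ + d * t)) - log (ξ + d * t)) - d ^ 2 * (log (1 - t) - log t))
    (f'' := fun t => d ^ 2 * (1 / (t * (1 - t)) - 1 / ((ξ + d * t) * (1 - (ξ + d * t)))))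
    ?_ ?_ ?_ <;> rw [interior_Icc] <;> intro t ht <;> obtain ⟨hφ0, hφ1⟩ := hφ t ht
  · have hlin : HasDerivAt (fun t => ξ + d * t) d t := by
      simpa using ((hasDerivAt_id t).const_mul d).const_add ξ
    have hderiv := ((hasDerivAt_binEntropy hφ0.ne' hφ1.ne).comp t hlin).sub
      ((hasDerivAt_binEntropy ht.1.ne' ht.2.ne).const_mul (d ^ 2))
    exact (hderiv.congr_deriv (by ring)).hasDerivWithinAt
  · have hlin : HasDerivAt (fun t => ξ + d * t) d t := by
      simpa using ((hasDerivAt_id t).const_mul d).const_add ξ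
    have hlin' : HasDerivAt (fun t => 1 - (ξ + d * t)) (-d) t := by
      simpa using hlin.const_sub 1
    have hid' : HasDerivAt (fun t : ℝ => 1 - t) (-1) t := by
      simpa using (hasDerivAt_id t).const_sub 1
    have hderiv := (((hlin'.log (by linarith)).sub (hlin.log hφ0.ne')).const_mul d).sub
      (((hid'.log (by linarith [ht.2])).sub (hasDerivAt_log ht.1.ne')).const_mul (d ^ 2))
    have ht0 : t ≠ 0 := ht.1.ne'
    have ht1 : 1 - t ≠ 0 := by linarith [ht.2]
    have hφ0' : ξ + d * t ≠ 0 := hφ0.ne'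
    have hφ1' : 1 - (ξ + d * t) ≠ 0 := by linarith
    exact (hderiv.congr_deriv (by field_simp; ring)).hasDerivWithinAt
  · -- `φ (1 - φ) - t (1 - t) = ξ (1 - ξ) (1 - 2t)²` for `φ = ξ + d t`
    have hkey : t * (1 - t) ≤ (ξ + d * t) * (1 - (ξ + d * t)) := by
      nlinarith [mul_nonneg (mul_nonneg h0 (sub_nonneg.2 h1)) (sq_nonneg (1 - 2 * t))]
    have : 1 / ((ξ + d * t) * (1 - (ξ + d * t))) ≤ 1 / (t * (1 - t)) :=
      one_div_le_one_div_of_le (mul_pos ht.1 (sub_pos.2 ht.2)) hkey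
    exact mul_nonneg (sq_nonneg d) (sub_nonneg.2 this)

theorem satisfiesSDPI_bsc [Fintype α] {ξ : ℝ} (h0 : 0 ≤ ξ) (h1 : ξ ≤ 1) :
    SatisfiesSDPI α (bsc ξ) ((1 - 2 * ξ) ^ 2) := by
  intro w hw0 hw1
  obtain ⟨P, t, hP0, hP1, ht, rfl⟩ := exists_eq_mul_bernoulliDist hw0
  rw [hw1] at hP1
  have hmean : ∑ x, P x * (ξ + (1 - 2 * ξ) * t x) = ξ + (1 - 2 * ξ) * ∑ x, P x * t x := by
    simp only [mul_add, sum_add_distrib, ← sum_mul, hP1, mul_left_comm (P _), ← mul_sum, one_mul]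
  have hJensen := (convexOn_binEntropy_affine_sub h0 h1).map_sum_le (fun x _ => hP0 x) hP1
    fun x _ => ht x
  simp only [smul_eq_mul, mul_sub, sum_sub_distrib, mul_left_comm (P _), ← mul_sum] at hJensen
  rw [pushThrough_bsc, mutInfo_mul_bernoulliDist (fun x => ξ + (1 - 2 * ξ) * t x) hP1,
    mutInfo_mul_bernoulliDist t hP1, hmean]
  linarith

lemma bscChannel_eq_piChannel (ξ : ℝ) {n : ℕ} (y z : Fin n → Bool) :
    bscChannel ξ y z = piChannel (bsc ξ) y z := by
  have hcard := card_filter_add_card_filter_not (s := univ) fun i => y i = z i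
  rw [card_univ, Fintype.card_fin] at hcard
  rw [bscChannel, piChannel, hammingDist]
  simp only [bsc, prod_ite, prod_const, mul_comm (ξ ^ _)]
  congr
  simp only [ne_eq]
  omega

end BinarySymmetricChannel

theorem stmt5 {α : Type*} [Fintype α] (n : ℕ) (ξ : ℝ) (hξ0 : 0 ≤ ξ) (hξ : ξ < 1 / 2)
    (w : α × (Fin n → Bool) → ℝ) (hw0 : ∀ q, 0 ≤ w q) (hw1 : ∑ q, w q = 1) :
    mutInfo (fun xz : α × (Fin n → Bool) =>
        ∑ y : Fin n → Bool, w (xz.1, y) * bscChannel ξ y xz.2)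
      ≤ (1 - (4 * ξ - 4 * ξ ^ 2) ^ n) * mutInfo w := by
  have hξ1 : ξ ≤ 1 := by linarith
  have hpi := (satisfiesSDPI_bsc (α := α) hξ0 hξ1).pi (isChannel_bsc hξ0 hξ1) (sq_nonneg _)
    (by nlinarith) n w hw0 hw1
  have hK : (bscChannel ξ : (Fin n → Bool) → (Fin n → Bool) → ℝ) = piChannel (bsc ξ) := by
    ext y z
    exact bscChannel_eq_piChannel ξ y z
  rw [← hK] at hpi
  rw [show 4 * ξ - 4 * ξ ^ 2 = 1 - (1 - 2 * ξ) ^ 2 by ring]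
  exact hpi
end

section
/- Let X, Y, Z be finitely-supported random variables forming a Markov chain X → Y → Z, where Y takes values in an n-element set, Z in an m-element set, and the channel Y → Z has transition matrix A = (a_{i,j}) (rows are probability vectors). Then I(X;Z) ≤ (1 - min_{k≠ℓ} (Σ_{j=1}^m √(a_{k,j} a_{ℓ,j}))^2) · I(X;Y). -/
/-!
Since `I(X;Y) = ∑ₓ D(P_{XY}(x, ·) ‖ P_X(x) P_Y)` with `D` the relative entropy of unnormalised
weights, it suffices to show `D(PA ‖ QA) ≤ (1 - c) D(P ‖ Q)` whenever `∑ P = ∑ Q`, where `c` is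
the least squared Bhattacharyya coefficient `(∑ⱼ √(a_kj a_lj))²` of two distinct rows of `A`.
Along `Q_t = Q + t (P - Q)` the function `(1 - c) D(Q_t ‖ Q) - D(Q_t A ‖ QA)` vanishes together
with its derivative at `t = 0`, and its second derivative is `(1 - c) χ²(P - Q ‖ Q_t) -
χ²((P - Q) A ‖ Q_t A)`, so everything reduces to the contraction `χ²(dA ‖ QA) ≤ (1 - c) χ²(d ‖ Q)`
for `∑ d = 0`. Writing `d = Q u`, Lagrange's identity turns `χ²(d ‖ Q)` into
`∑ₖₗ Q_k Q_l (u_k - u_l)² w_kl` with `w_kl = 1 / (2 ∑ Q)`, and the loss `χ²(d ‖ Q) - χ²(dA ‖ QA)`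
into the same sum with `w_kl = ∑ⱼ a_kj a_lj / (2 (QA)_j)`; by Cauchy–Schwarz the latter weights
are at least `c` times the former.
-/

open Finset

namespace SDPI

open Real Set

variable {ι κ : Type*} [Fintype ι] {A : ι → κ → ℝ}

/-- Since `Real.log 0 = 0`, this is the relative entropy only when `q i = 0 → p i = 0`. -/
noncomputable def klDiv (p q : ι → ℝ) : ℝ :=
  ∑ i, p i * (log (p i) - log (q i))

noncomputable def chiSq (d q : ι → ℝ) : ℝ :=
  ∑ i, d i ^ 2 / q i

noncomputable def pushforward (A : ι → κ → ℝ) (P : ι → ℝ) (j : κ) : ℝ :=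
  ∑ i, P i * A i j

theorem klDiv_self (q : ι → ℝ) : klDiv q q = 0 := by
  simp [klDiv]

theorem sum_sum_mul_mul_sub_sq (w u : ι → ℝ) :
    ∑ k, ∑ l, w k * w l * (u k - u l) ^ 2
      = 2 * ((∑ i, w i) * ∑ i, w i * u i ^ 2 - (∑ i, w i * u i) ^ 2) := by
  have h : ∀ k l, w k * w l * (u k - u l) ^ 2
      = w k * u k ^ 2 * w l + w k * (w l * u l ^ 2) - 2 * (w k * u k) * (w l * u l) := by
    intro k l; ring
  simp only [h, sum_add_distrib, sum_sub_distrib, ← mul_sum, ← sum_mul]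
  ring

theorem sq_sum_mul_div_sum {w : ι → ℝ} (hw : ∀ i, 0 ≤ w i) (u : ι → ℝ) :
    (∑ i, w i * u i) ^ 2 / ∑ i, w i
      = ∑ i, w i * u i ^ 2 - (∑ k, ∑ l, w k * w l * (u k - u l) ^ 2) / (2 * ∑ i, w i) := by
  rcases (sum_nonneg fun i _ => hw i).eq_or_lt with hS | hS
  · have hw0 : ∀ i, w i = 0 := fun i =>
      (sum_eq_zero_iff_of_nonneg fun i _ => hw i).mp hS.symm i (mem_univ i)
    simp [hw0]
  · rw [sum_sum_mul_mul_sub_sq]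
    field_simp
    ring

theorem sq_sum_sqrt_mul_le [Fintype κ] {a b q : κ → ℝ} (ha : ∀ j, 0 ≤ a j) (hb : ∀ j, 0 ≤ b j)
    (hq : ∀ j, 0 ≤ q j) (hqa : ∀ j, q j = 0 → a j = 0) :
    (∑ j, √(a j * b j)) ^ 2 ≤ (∑ j, a j * b j / q j) * ∑ j, q j := by
  refine sum_sq_le_sum_mul_sum_of_sq_le_mul _
    (fun j _ => div_nonneg (mul_nonneg (ha j) (hb j)) (hq j)) (fun j _ => hq j) fun j _ => ?_
  rw [sq_sqrt (mul_nonneg (ha j) (hb j))]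
  rcases (hq j).eq_or_lt with h | h
  · simp [hqa j h.symm]
  · rw [div_mul_cancel₀ _ h.ne']

theorem pushforward_add (P Q : ι → ℝ) :
    pushforward A (P + Q) = pushforward A P + pushforward A Q := by
  funext j
  simp [pushforward, add_mul, sum_add_distrib]

theorem pushforward_smul (s : ℝ) (P : ι → ℝ) :
    pushforward A (s • P) = s • pushforward A P := by
  funext j
  simp [pushforward, mul_sum, mul_assoc]

theorem pushforward_sub (P Q : ι → ℝ) :
    pushforward A (P - Q) = pushforward A P - pushforward A Q := by
  funext j
  simp [pushforward, sub_mul, sum_sub_distrib]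

theorem pushforward_nonneg (hA0 : ∀ i j, 0 ≤ A i j) {P : ι → ℝ} (hP : ∀ i, 0 ≤ P i) (j : κ) :
    0 ≤ pushforward A P j :=
  sum_nonneg fun i _ => mul_nonneg (hP i) (hA0 i j)

theorem sum_pushforward_of_sum_row_eq_one [Fintype κ] (hA1 : ∀ i, ∑ j, A i j = 1) (P : ι → ℝ) :
    ∑ j, pushforward A P j = ∑ i, P i := by
  simp only [pushforward]
  rw [sum_comm]
  simp [← mul_sum, hA1]

theorem mul_eq_zero_of_pushforward_eq_zero (hA0 : ∀ i j, 0 ≤ A i j) {Q : ι → ℝ} (hQ : ∀ i, 0 ≤ Q i)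
    {j : κ} (h : pushforward A Q j = 0) (i : ι) : Q i * A i j = 0 :=
  (sum_eq_zero_iff_of_nonneg fun i _ => mul_nonneg (hQ i) (hA0 i j)).mp h i (mem_univ i)

theorem pushforward_eq_zero_of_eq_zero (hA0 : ∀ i j, 0 ≤ A i j) {P Q : ι → ℝ}
    (hQ : ∀ i, 0 ≤ Q i) (hQP : ∀ i, Q i = 0 → P i = 0) {j : κ} (h : pushforward A Q j = 0) :
    pushforward A P j = 0 := by
  refine sum_eq_zero fun i _ => ?_
  rcases mul_eq_zero.mp (mul_eq_zero_of_pushforward_eq_zero hA0 hQ h i) with hi | hi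
  · simp [hQP i hi]
  · simp [hi]

theorem chiSq_pushforward_mul_eq [Fintype κ] (hA0 : ∀ i j, 0 ≤ A i j)
    (hA1 : ∀ i, ∑ j, A i j = 1) {Q : ι → ℝ} (hQ : ∀ i, 0 ≤ Q i) (u : ι → ℝ) :
    chiSq (pushforward A fun i => Q i * u i) (pushforward A Q)
      = ∑ i, Q i * u i ^ 2 - (∑ k, ∑ l, Q k * Q l * (u k - u l) ^ 2
          * ∑ j, A k j * A l j / pushforward A Q j) / 2 := by
  have hj : ∀ j, (pushforward A fun i => Q i * u i) j ^ 2 / pushforward A Q j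
      = ∑ i, Q i * A i j * u i ^ 2
        - (∑ k, ∑ l, Q k * A k j * (Q l * A l j) * (u k - u l) ^ 2) / (2 * pushforward A Q j) := by
    intro j
    rw [pushforward, pushforward, ← sq_sum_mul_div_sum fun i => mul_nonneg (hQ i) (hA0 i j)]
    simp only [mul_right_comm]
  simp only [chiSq, hj, sum_sub_distrib]
  congr 1
  · rw [sum_comm]
    refine sum_congr rfl fun i _ => ?_
    simp only [mul_comm (Q i), mul_assoc, ← sum_mul, hA1, one_mul]
  · simp only [sum_div, mul_sum]
    rw [sum_comm]
    refine sum_congr rfl fun k _ => ?_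
    rw [sum_comm]
    refine sum_congr rfl fun l _ => sum_congr rfl fun j _ => ?_
    ring

theorem sq_sum_sqrt_mul_le_sum_div_pushforward [Fintype κ] (hA0 : ∀ i j, 0 ≤ A i j)
    (hA1 : ∀ i, ∑ j, A i j = 1) {Q : ι → ℝ} (hQ : ∀ i, 0 ≤ Q i) {k : ι} (hk : Q k ≠ 0) (l : ι) :
    (∑ j, √(A k j * A l j)) ^ 2 ≤ (∑ j, A k j * A l j / pushforward A Q j) * ∑ i, Q i := by
  rw [← sum_pushforward_of_sum_row_eq_one hA1 Q]
  refine sq_sum_sqrt_mul_le (hA0 k) (hA0 l) (pushforward_nonneg hA0 hQ) fun j hj => ?_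
  exact (mul_eq_zero.mp (mul_eq_zero_of_pushforward_eq_zero hA0 hQ hj k)).resolve_left hk

theorem chiSq_pushforward_le [Fintype κ] (hA0 : ∀ i j, 0 ≤ A i j) (hA1 : ∀ i, ∑ j, A i j = 1)
    {c : ℝ} (hc : ∀ k l, k ≠ l → c ≤ (∑ j, √(A k j * A l j)) ^ 2) {Q d : ι → ℝ}
    (hQ : ∀ i, 0 ≤ Q i) (hdQ : ∀ i, Q i = 0 → d i = 0) (hd : ∑ i, d i = 0) :
    chiSq (pushforward A d) (pushforward A Q) ≤ (1 - c) * chiSq d Q := by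
  set u : ι → ℝ := fun i => d i / Q i
  have hdu : d = fun i => Q i * u i := by
    funext i
    rcases (hQ i).eq_or_lt with h | h
    · simp [u, hdQ i h.symm]
    · exact (mul_div_cancel₀ _ h.ne').symm
  set S := ∑ i, Q i
  set T := ∑ i, Q i * u i ^ 2
  set X : ι → ι → ℝ := fun k l => Q k * Q l * (u k - u l) ^ 2
  set g : ι → ι → ℝ := fun k l => ∑ j, A k j * A l j / pushforward A Q j
  have hin : chiSq d Q = T := by
    refine sum_congr rfl fun i _ => ?_
    rcases (hQ i).eq_or_lt with h | h
    · simp [hdu, ← h]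
    · rw [hdu]; field_simp
  have hvar : ∑ k, ∑ l, X k l = 2 * S * T := by
    have : ∑ i, Q i * u i = 0 := by rw [← hd, hdu]
    simp only [X, sum_sum_mul_mul_sub_sq, this]
    ring
  have hpair : ∀ k l, c * X k l ≤ S * (X k l * g k l) := by
    intro k l
    rcases eq_or_ne k l with rfl | hkl
    · simp [X]
    rcases eq_or_ne (Q k) 0 with hk | hk
    · simp [X, hk]
    have hX : 0 ≤ X k l := by have := hQ k; have := hQ l; positivity
    have := (hc k l hkl).trans (sq_sum_sqrt_mul_le_sum_div_pushforward hA0 hA1 hQ hk l)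
    nlinarith
  rw [hin, hdu, chiSq_pushforward_mul_eq hA0 hA1 hQ u]
  rcases (sum_nonneg fun i _ => hQ i).eq_or_lt with hS | hS
  · have hQ0 : ∀ i, Q i = 0 := fun i =>
      (sum_eq_zero_iff_of_nonneg fun i _ => hQ i).mp hS.symm i (mem_univ i)
    simp [T, hQ0]
  · have : c * (2 * S * T) ≤ S * ∑ k, ∑ l, X k l * g k l := by
      rw [← hvar, mul_sum, mul_sum]
      exact sum_le_sum fun k _ => by rw [mul_sum, mul_sum]; exact sum_le_sum fun l _ => hpair k l
    nlinarith

theorem apply_le_apply_of_deriv2_nonneg {f f' f'' : ℝ → ℝ} {a b : ℝ} (hab : a ≤ b)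
    (hf : ContinuousOn f (Icc a b)) (hf' : ∀ t ∈ Ico a b, HasDerivAt f (f' t) t)
    (hf'' : ∀ t ∈ Ico a b, HasDerivAt f' (f'' t) t) (hf''_nonneg : ∀ t ∈ Ioo a b, 0 ≤ f'' t)
    (hf'a : 0 ≤ f' a) : f a ≤ f b := by
  have hmono' : MonotoneOn f' (Ico a b) :=
    monotoneOn_of_hasDerivWithinAt_nonneg (convex_Ico a b)
      (fun t ht => (hf'' t ht).continuousAt.continuousWithinAt)
      (by rw [interior_Ico]; exact fun t ht => (hf'' t (Ioo_subset_Ico_self ht)).hasDerivWithinAt)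
      (by rwa [interior_Ico])
  have hmono : MonotoneOn f (Icc a b) :=
    monotoneOn_of_hasDerivWithinAt_nonneg (convex_Icc a b) hf
      (by rw [interior_Icc]; exact fun t ht => (hf' t (Ioo_subset_Ico_self ht)).hasDerivWithinAt)
      (by
        rw [interior_Icc]
        exact fun t ht => hf'a.trans
          (hmono' (left_mem_Ico.2 (ht.1.trans ht.2)) (Ioo_subset_Ico_self ht) ht.1.le))
  exact hmono (left_mem_Icc.2 hab) (right_mem_Icc.2 hab) hab

theorem add_mul_sub_pos {a b t : ℝ} (ha : 0 < a) (hb : 0 ≤ b) (ht : t ∈ Ico (0 : ℝ) 1) :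
    0 < a + t * (b - a) := by
  nlinarith [ht.1, ht.2]

theorem hasDerivAt_add_mul_sub_mul_log {a b t : ℝ} (ha : 0 ≤ a) (hb : 0 ≤ b) (hab : a = 0 → b = 0)
    (ht : t ∈ Ico (0 : ℝ) 1) :
    HasDerivAt (fun s => (a + s * (b - a)) * (log (a + s * (b - a)) - log a))
      ((b - a) * (log (a + t * (b - a)) - log a) + (b - a)) t := by
  rcases ha.eq_or_lt with rfl | ha
  · simpa [hab rfl] using hasDerivAt_const t (0 : ℝ)
  have hr := add_mul_sub_pos ha hb ht
  have hlin : HasDerivAt (fun s => a + s * (b - a)) (b - a) t := by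
    simpa using ((hasDerivAt_id t).mul_const (b - a)).const_add a
  refine (hlin.mul ((hlin.log hr.ne').sub_const (log a))).congr_deriv ?_
  rw [mul_div_cancel₀ _ hr.ne']

theorem hasDerivAt_mul_log_add_mul_sub {a b t : ℝ} (ha : 0 ≤ a) (hb : 0 ≤ b) (hab : a = 0 → b = 0)
    (ht : t ∈ Ico (0 : ℝ) 1) :
    HasDerivAt (fun s => (b - a) * (log (a + s * (b - a)) - log a))
      ((b - a) ^ 2 / (a + t * (b - a))) t := by
  rcases ha.eq_or_lt with rfl | ha
  · simpa [hab rfl] using hasDerivAt_const t (0 : ℝ)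
  have hr := add_mul_sub_pos ha hb ht
  have hlin : HasDerivAt (fun s => a + s * (b - a)) (b - a) t := by
    simpa using ((hasDerivAt_id t).mul_const (b - a)).const_add a
  refine (((hlin.log hr.ne').sub_const (log a)).const_mul (b - a)).congr_deriv ?_
  ring

noncomputable def klDivPathDeriv (p q : ι → ℝ) (t : ℝ) : ℝ :=
  ∑ i, (p i - q i) * (log (q i + t * (p i - q i)) - log (q i))

theorem continuous_klDiv_path (p q : ι → ℝ) :
    Continuous fun t : ℝ => klDiv (q + t • (p - q)) q := by
  refine continuous_finsetSum _ fun i _ => ?_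
  have hr : Continuous fun t : ℝ => q i + t * (p i - q i) := by fun_prop
  refine ((continuous_mul_log.comp hr).sub (hr.mul (continuous_const (y := log (q i))))).congr
    fun t => ?_
  simp only [Function.comp_apply, Pi.add_apply, Pi.smul_apply, Pi.sub_apply, Pi.mul_apply,
    smul_eq_mul]
  ring

theorem hasDerivAt_klDiv_path {p q : ι → ℝ} (hp : ∀ i, 0 ≤ p i) (hq : ∀ i, 0 ≤ q i)
    (hqp : ∀ i, q i = 0 → p i = 0) (hsum : ∑ i, p i = ∑ i, q i) {t : ℝ} (ht : t ∈ Ico (0 : ℝ) 1) :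
    HasDerivAt (fun s => klDiv (q + s • (p - q)) q) (klDivPathDeriv p q t) t := by
  have h := HasDerivAt.fun_sum (u := univ) fun i _ =>
    hasDerivAt_add_mul_sub_mul_log (hq i) (hp i) (hqp i) ht
  have hdiff : ∑ i, (p i - q i) = 0 := by rw [sum_sub_distrib, hsum, sub_self]
  rw [sum_add_distrib, hdiff, add_zero] at h
  exact h

theorem hasDerivAt_klDivPathDeriv {p q : ι → ℝ} (hp : ∀ i, 0 ≤ p i) (hq : ∀ i, 0 ≤ q i)
    (hqp : ∀ i, q i = 0 → p i = 0) {t : ℝ} (ht : t ∈ Ico (0 : ℝ) 1) :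
    HasDerivAt (klDivPathDeriv p q) (chiSq (p - q) (q + t • (p - q))) t :=
  HasDerivAt.fun_sum fun i _ => hasDerivAt_mul_log_add_mul_sub (hq i) (hp i) (hqp i) ht

theorem klDiv_pushforward_le [Fintype κ] (hA0 : ∀ i j, 0 ≤ A i j) (hA1 : ∀ i, ∑ j, A i j = 1)
    {c : ℝ} (hc : ∀ k l, k ≠ l → c ≤ (∑ j, √(A k j * A l j)) ^ 2) {P Q : ι → ℝ}
    (hP : ∀ i, 0 ≤ P i) (hQ : ∀ i, 0 ≤ Q i) (hQP : ∀ i, Q i = 0 → P i = 0)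
    (hsum : ∑ i, P i = ∑ i, Q i) :
    klDiv (pushforward A P) (pushforward A Q) ≤ (1 - c) * klDiv P Q := by
  set P' := pushforward A P
  set Q' := pushforward A Q
  have hP' : ∀ j, 0 ≤ P' j := pushforward_nonneg hA0 hP
  have hQ' : ∀ j, 0 ≤ Q' j := pushforward_nonneg hA0 hQ
  have hQP' : ∀ j, Q' j = 0 → P' j = 0 := fun j => pushforward_eq_zero_of_eq_zero hA0 hQ hQP
  have hsum' : ∑ j, P' j = ∑ j, Q' j := by
    simp only [P', Q', sum_pushforward_of_sum_row_eq_one hA1, hsum]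
  have hchiSq : ∀ t ∈ Ioo (0 : ℝ) 1,
      chiSq (P' - Q') (Q' + t • (P' - Q')) ≤ (1 - c) * chiSq (P - Q) (Q + t • (P - Q)) := by
    intro t ht
    rw [← pushforward_sub, ← pushforward_smul, ← pushforward_add]
    refine chiSq_pushforward_le hA0 hA1 hc (fun i => ?_) (fun i hi => ?_)
      (by simp [sum_sub_distrib, hsum])
    · have := hP i; have := hQ i
      show 0 ≤ Q i + t * (P i - Q i)
      nlinarith [ht.1, ht.2]
    · rcases (hQ i).eq_or_lt with h | h
      · simp [hQP i h.symm, ← h]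
      · exact absurd hi (add_mul_sub_pos h (hP i) (Ioo_subset_Ico_self ht)).ne'
  have key := apply_le_apply_of_deriv2_nonneg
    (f := fun t => (1 - c) * klDiv (Q + t • (P - Q)) Q - klDiv (Q' + t • (P' - Q')) Q')
    zero_le_one
    (((continuous_klDiv_path P Q).const_mul _).sub (continuous_klDiv_path P' Q')).continuousOn
    (fun t ht => ((hasDerivAt_klDiv_path hP hQ hQP hsum ht).const_mul _).sub
      (hasDerivAt_klDiv_path hP' hQ' hQP' hsum' ht))
    (fun t ht => ((hasDerivAt_klDivPathDeriv hP hQ hQP ht).const_mul _).sub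
      (hasDerivAt_klDivPathDeriv hP' hQ' hQP' ht))
    (fun t ht => sub_nonneg.2 (hchiSq t ht)) (by simp [klDivPathDeriv])
  simp only [zero_smul, add_zero, one_smul, add_sub_cancel, klDiv_self, mul_zero, sub_zero] at key
  linarith

theorem mutInfo_eq_sum_klDiv {α β : Type*} [Fintype α] [Fintype β] {v : α × β → ℝ}
    (hv : ∀ z, 0 ≤ v z) :
    mutInfo v = ∑ x, klDiv (fun y => v (x, y)) fun y => (∑ y', v (x, y')) * ∑ x', v (x', y) := by
  have hterm : ∀ x y, v (x, y) * (log (v (x, y)) - log ((∑ y', v (x, y')) * ∑ x', v (x', y)))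
      = v (x, y) * log (v (x, y)) - v (x, y) * log (∑ y', v (x, y'))
        - v (x, y) * log (∑ x', v (x', y)) := by
    intro x y
    rcases (hv (x, y)).eq_or_lt with h | h
    · simp [← h]
    have hX : 0 < ∑ y', v (x, y') :=
      h.trans_le (single_le_sum (fun y' _ => hv (x, y')) (mem_univ y))
    have hY : 0 < ∑ x', v (x', y) :=
      h.trans_le (single_le_sum (f := fun x' => v (x', y)) (fun x' _ => hv (x', y)) (mem_univ x))
    rw [log_mul hX.ne' hY.ne']
    ring
  have hX : ∑ x, ∑ y, v (x, y) * log (∑ y', v (x, y'))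
      = ∑ x, (∑ y, v (x, y)) * log (∑ y', v (x, y')) := by
    simp only [sum_mul]
  have hY : ∑ x, ∑ y, v (x, y) * log (∑ x', v (x', y))
      = ∑ y, (∑ x, v (x, y)) * log (∑ x', v (x', y)) := by
    rw [sum_comm]; simp only [sum_mul]
  simp only [mutInfo, ent, klDiv, hterm, sum_sub_distrib, hX, hY, Fintype.sum_prod_type]
  ring

theorem mutInfo_pushforward_le {α : Type*} [Fintype α] [Fintype κ] (hA0 : ∀ i j, 0 ≤ A i j)
    (hA1 : ∀ i, ∑ j, A i j = 1) {c : ℝ} (hc : ∀ k l, k ≠ l → c ≤ (∑ j, √(A k j * A l j)) ^ 2)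
    {w : α × ι → ℝ} (hw0 : ∀ q, 0 ≤ w q) (hw1 : ∑ q, w q = 1) :
    mutInfo (fun xz : α × κ => ∑ i, w (xz.1, i) * A i xz.2) ≤ (1 - c) * mutInfo w := by
  rw [mutInfo_eq_sum_klDiv fun z => sum_nonneg fun i _ => mul_nonneg (hw0 _) (hA0 _ _),
    mutInfo_eq_sum_klDiv hw0, mul_sum]
  refine sum_le_sum fun x _ => ?_
  set wX := ∑ i, w (x, i)
  set wY : ι → ℝ := fun i => ∑ x', w (x', i)
  have hX : ∑ z, ∑ i, w (x, i) * A i z = wX := sum_pushforward_of_sum_row_eq_one hA1 _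
  have hY : ∀ z, ∑ x', ∑ i, w (x', i) * A i z = pushforward A wY z := fun z => by
    simp only [pushforward, wY, sum_mul]
    exact sum_comm
  simp only [hX, hY]
  have hXY : (fun z => wX * pushforward A wY z) = pushforward A (wX • wY) :=
    (pushforward_smul wX wY).symm
  have hwY1 : ∑ i, wY i = 1 := by
    rw [← hw1, Fintype.sum_prod_type, sum_comm]
  rw [hXY]
  refine klDiv_pushforward_le (P := fun i => w (x, i)) hA0 hA1 hc (fun i => hw0 _)
    (fun i => mul_nonneg (sum_nonneg fun i _ => hw0 _) (sum_nonneg fun x' _ => hw0 _))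
    (fun i hi => ?_) (by simp [wX, ← mul_sum, hwY1])
  rcases mul_eq_zero.mp hi with h | h
  · exact (sum_eq_zero_iff_of_nonneg fun i _ => hw0 _).mp h i (mem_univ i)
  · exact (sum_eq_zero_iff_of_nonneg fun x' _ => hw0 _).mp h x (mem_univ x)

end SDPI

theorem stmt6_general {α : Type*} [Fintype α] (n m : ℕ)
    (A : Fin n → Fin m → ℝ) (hA0 : ∀ i j, 0 ≤ A i j) (hA1 : ∀ i, ∑ j, A i j = 1)
    (w : α × Fin n → ℝ) (hw0 : ∀ q, 0 ≤ w q) (hw1 : ∑ q, w q = 1) :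
    mutInfo (fun xz : α × Fin m => ∑ i : Fin n, w (xz.1, i) * A i xz.2)
      ≤ (1 - sInf {s : ℝ | ∃ k ℓ : Fin n, k ≠ ℓ ∧
            s = (∑ j, Real.sqrt (A k j * A ℓ j)) ^ 2}) * mutInfo w := by
  have hbdd : BddBelow {s : ℝ | ∃ k ℓ : Fin n, k ≠ ℓ ∧
      s = (∑ j, Real.sqrt (A k j * A ℓ j)) ^ 2} := by
    refine ⟨0, ?_⟩
    rintro s ⟨k, l, -, rfl⟩
    positivity
  exact SDPI.mutInfo_pushforward_le hA0 hA1 (fun k l hkl => csInf_le hbdd ⟨k, l, hkl, rfl⟩) hw0 hw1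

theorem stmt6 {α : Type*} [Fintype α] (n m : ℕ) (hn : 2 ≤ n)
    (A : Fin n → Fin m → ℝ) (hA0 : ∀ i j, 0 ≤ A i j) (hA1 : ∀ i, ∑ j, A i j = 1)
    (w : α × Fin n → ℝ) (hw0 : ∀ q, 0 ≤ w q) (hw1 : ∑ q, w q = 1) :
    mutInfo (fun xz : α × Fin m => ∑ i : Fin n, w (xz.1, i) * A i xz.2)
      ≤ (1 - sInf {s : ℝ | ∃ k ℓ : Fin n, k ≠ ℓ ∧
            s = (∑ j, Real.sqrt (A k j * A ℓ j)) ^ 2}) * mutInfo w :=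
  stmt6_general n m A hA0 hA1 w hw0 hw1
end
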